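/- For every k ≥ 0, the following conditions are equivalent: (a) L(ε) stabilizes at k; (b) N_{k+1}^c ≠ {0} and N_{k+l}^c = {0} for all l ≥ 2; (c) R_{k+1} ≠ {0} and R_{k+l} = {0} for all l ≥ 2; (d) N_k ⊋ N_{k+1} and N_{k+1} = N_{k+l} for all l ≥ 2. -/

import Mathlib

/-!
The whole statement rests on one fact: `N m` is exactly the set of root elements of Jordan chains
of length `m`. If `x ∈ N m`, the maps `M a m` produce such a chain, `cᵢ = M (m - i) m x`.
Conversely, subtracting this canonical chain from an arbitrary chain `e` of length `m + 1` leaves a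
chain starting at `0`; by induction its level sums lie in `R 1 ⊔ ⋯ ⊔ R m`, so applying
`I - P 1 - ⋯ - P m` to the level-`m` equation of `e` leaves exactly `S (m + 1) (e 0) = 0`.
Hence `rank x` is the last index `m` with `x ∈ N m`, and each of the four conditions says that the
decreasing sequence `N m` drops for the last time at `k`; a drop at step `j + 1` is the same as
`Nc (j + 1) ≠ ⊥`, and the same as `R (j + 1) ≠ ⊥`.
-/

open Finset

section Depth

variable {𝕂 : Type*} [Semiring 𝕂] {B : Type*} [AddCommMonoid B] [Module 𝕂 B]
  {N : ℕ → Submodule 𝕂 B} {b : B}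

noncomputable def depth (N : ℕ → Submodule 𝕂 B) (b : B) : ℕ∞ :=
  sSup {x | ∃ m : ℕ, 1 ≤ m ∧ b ∈ N m ∧ x = m}

lemma le_depth {m : ℕ} (hm : 1 ≤ m) (hb : b ∈ N m) : (m : ℕ∞) ≤ depth N b :=
  le_sSup ⟨m, hm, hb, rfl⟩

lemma depth_le_iff (hN : Antitone N) {j : ℕ} : depth N b ≤ j ↔ b ∉ N (j + 1) := by
  constructor
  · intro hle hb
    have := (le_depth (Nat.le_add_left 1 j) hb).trans hle
    norm_cast at this
    omega
  · intro hb
    refine sSup_le ?_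
    rintro _ ⟨m, -, hm, rfl⟩
    by_contra hlt
    exact hb (hN (by exact_mod_cast not_le.1 hlt) hm)

lemma depth_eq_top_iff (hN : Antitone N) : depth N b = ⊤ ↔ ∀ m, b ∈ N m := by
  constructor
  · intro htop m
    by_contra hb
    have := (depth_le_iff hN).2 fun hb' => hb (hN m.le_succ hb')
    simp [htop] at this
  · intro hb
    by_contra hne
    obtain ⟨n, hn⟩ := ENat.ne_top_iff_exists.1 hne
    exact (depth_le_iff hN).1 hn.ge (hb _)

lemma depth_eq_coe_iff (hN : Antitone N) (h0 : N 0 = ⊤) {k : ℕ} :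
    depth N b = k ↔ b ∈ N k ∧ b ∉ N (k + 1) := by
  rw [← depth_le_iff hN]
  cases k with
  | zero => simp [h0]
  | succ k =>
    rw [← (depth_le_iff hN).not_left, not_le, ← ENat.add_one_le_iff (ENat.natCast_ne_top k),
      le_antisymm_iff, and_comm]
    norm_cast

theorem depth_stabilizes_iff (hN : Antitone N) (h0 : N 0 = ⊤) (k : ℕ) :
    ((∀ b, depth N b ≤ k ∨ depth N b = ⊤) ∧ ∃ b, depth N b = k) ↔
      (N (k + 1) < N k ∧ ∀ l, 2 ≤ l → N (k + 1) = N (k + l)) := by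
  refine and_comm.trans (and_congr ?_ ?_)
  · simp only [depth_eq_coe_iff hN h0, SetLike.lt_iff_le_and_exists, hN k.le_succ, true_and]
  · simp only [depth_le_iff hN, depth_eq_top_iff hN, or_iff_not_imp_left, not_not]
    constructor
    · intro h l hl
      exact le_antisymm (fun b hb => h b hb _) (hN (by omega))
    · intro h b hb m
      rcases le_or_gt m (k + 1) with hm | hm
      · exact hN hm hb
      · obtain ⟨l, rfl⟩ : ∃ l, m = k + l := ⟨m - k, by omega⟩
        exact h l (by omega) ▸ hb

end Depth

lemma not_and_forall_iff_lt_and_forall_eq {α : Type*} [PartialOrder α] {f : ℕ → α}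
    (hf : Antitone f) {p : ℕ → Prop} (hp : ∀ j, p (j + 1) ↔ f (j + 1) = f j) (k : ℕ) :
    (¬ p (k + 1) ∧ ∀ l, 2 ≤ l → p (k + l)) ↔
      (f (k + 1) < f k ∧ ∀ l, 2 ≤ l → f (k + 1) = f (k + l)) := by
  refine and_congr (by rw [hp, (hf k.le_succ).lt_iff_ne]) ⟨fun h l hl => ?_, fun h l hl => ?_⟩
  · induction l, hl using Nat.le_induction with
    | base => exact ((hp (k + 1)).1 (h 2 le_rfl)).symm
    | succ l hl ih => exact ih.trans ((hp (k + l)).1 (h (l + 1) (by omega))).symm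
  · obtain ⟨l, rfl⟩ : ∃ l', l = l' + 1 := ⟨l - 1, by omega⟩
    have hl0 : f (k + l) = f (k + 1) := by
      rcases Nat.lt_or_ge l 2 with hl' | hl'
      · rw [show l = 1 by omega]
      · exact (h l hl').symm
    exact (hp (k + l)).2 ((h (l + 1) hl).symm.trans hl0.symm)

lemma eq_bot_iff_of_disjoint_of_sup_eq {α : Type*} [Lattice α] [OrderBot α] {a b c : α}
    (hd : Disjoint a b) (hs : a ⊔ b = c) : a = ⊥ ↔ b = c := by
  constructor
  · rintro rfl
    simpa using hs
  · rintro rfl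
    exact hd.eq_bot_of_le (hs ▸ le_sup_left)

section Reduction

variable {𝕂 : Type*} [Semiring 𝕂] {B B' : Type*} [AddCommGroup B] [Module 𝕂 B]
  [AddCommGroup B'] [Module 𝕂 B']

def IsJordanChain (L : ℕ → B →ₗ[𝕂] B') (m : ℕ) (b : ℕ → B) : Prop :=
  ∀ l, l + 1 ≤ m → ∑ i ∈ range (l + 1), L i (b (l - i)) = 0

def chainTail (L : ℕ → B →ₗ[𝕂] B') (b : ℕ → B) (l : ℕ) : B' :=
  ∑ i ∈ Icc 1 l, L i (b (l - i))

variable {L : ℕ → B →ₗ[𝕂] B'} {m : ℕ} {b c : ℕ → B}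

lemma sum_range_eq_add_chainTail (l : ℕ) :
    ∑ i ∈ range (l + 1), L i (b (l - i)) = L 0 (b l) + chainTail L b l := by
  rw [range_eq_Ico, sum_eq_sum_Ico_succ_bot l.succ_pos, Nat.sub_zero]
  rfl

lemma chainTail_sub (l : ℕ) : chainTail L (b - c) l = chainTail L b l - chainTail L c l := by
  simp only [chainTail, Pi.sub_apply, map_sub, sum_sub_distrib]

lemma chainTail_shift (h0 : b 0 = 0) (l : ℕ) :
    chainTail L b (l + 1) = chainTail L (fun i => b (i + 1)) l := by
  rw [chainTail, sum_Icc_succ_top (by omega), Nat.sub_self, h0, map_zero, add_zero]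
  refine sum_congr rfl fun i hi => ?_
  rw [Nat.sub_add_comm (mem_Icc.1 hi).2]

namespace IsJordanChain

lemma mono (hb : IsJordanChain L m b) {n : ℕ} (h : n ≤ m) : IsJordanChain L n b :=
  fun l hl => hb l (hl.trans h)

lemma sub (hb : IsJordanChain L m b) (hc : IsJordanChain L m c) : IsJordanChain L m (b - c) :=
  fun l hl => by simp only [Pi.sub_apply, map_sub, sum_sub_distrib, hb l hl, hc l hl, sub_zero]

lemma shift (hb : IsJordanChain L (m + 1) b) (h0 : b 0 = 0) :
    IsJordanChain L m (fun i => b (i + 1)) := fun l hl => by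
  have := hb (l + 1) (by omega)
  rw [sum_range_succ, Nat.sub_self, h0, map_zero, add_zero] at this
  rw [← this]
  refine sum_congr rfl fun i hi => ?_
  rw [Nat.sub_add_comm (Nat.lt_succ_iff.1 (mem_range.1 hi))]

end IsJordanChain

-- The projection of `B'` onto `Rc k` along `R 1 ⊔ ⋯ ⊔ R k`.
def projCompl (P : ℕ → B' →ₗ[𝕂] B') (k : ℕ) : B' →ₗ[𝕂] B' :=
  LinearMap.id - ∑ i ∈ Icc 1 k, P i

lemma projCompl_apply (P : ℕ → B' →ₗ[𝕂] B') (k : ℕ) (y : B') :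
    projCompl P k y = y - ∑ i ∈ Icc 1 k, P i y := by
  simp [projCompl]

lemma projCompl_succ_apply (P : ℕ → B' →ₗ[𝕂] B') (k : ℕ) (y : B') :
    projCompl P (k + 1) y = projCompl P k y - P (k + 1) y := by
  rw [projCompl_apply, projCompl_apply, sum_Icc_succ_top (by omega), sub_add_eq_sub_sub]

end Reduction

section Scheme

variable {𝕂 : Type*} [Ring 𝕂] {B B' : Type*} [AddCommGroup B] [Module 𝕂 B]
  [AddCommGroup B'] [Module 𝕂 B']

structure IsReductionScheme (L Sb S : ℕ → B →ₗ[𝕂] B') (N Nc : ℕ → Submodule 𝕂 B)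
    (R Rc : ℕ → Submodule 𝕂 B') (P : ℕ → B' →ₗ[𝕂] B') (T : ℕ → B' →ₗ[𝕂] B)
    (E M : ℕ → ℕ → B →ₗ[𝕂] B) : Prop where
  N_zero : N 0 = ⊤
  Sb_one : Sb 1 = L 0
  Sb_succ : ∀ k, 1 ≤ k → Sb (k + 1) = ∑ i ∈ Icc 1 k, (L i).comp (M i k)
  S_succ : ∀ k, S (k + 1) = Sb (k + 1) - ∑ i ∈ Icc 1 k, (P i).comp (Sb (k + 1))
  N_succ : ∀ k, N (k + 1) = LinearMap.ker (S (k + 1)) ⊓ N k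
  R_succ : ∀ k, R (k + 1) = Submodule.map (S (k + 1)) (N k)
  Nc_le : ∀ k, Nc (k + 1) ≤ N k
  R_le_Rc : ∀ k, R (k + 1) ≤ Rc k
  Rc_antitone : Antitone Rc
  P_range : ∀ i, 1 ≤ i → LinearMap.range (P i) ≤ R i
  P_eq_self : ∀ i, 1 ≤ i → ∀ y ∈ R i, P i y = y
  P_eq_zero_of_mem_Rc : ∀ i, 1 ≤ i → ∀ y ∈ Rc i, P i y = 0
  P_eq_zero_of_mem_R : ∀ i j, 1 ≤ j → j < i → ∀ y ∈ R j, P i y = 0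
  T_mem : ∀ i, 1 ≤ i → ∀ y, T i y ∈ Nc i
  S_T : ∀ i, 1 ≤ i → ∀ y, S i (T i y) = P i y
  E_diag : ∀ k, E (k + 1) (k + 1) = LinearMap.id
  E_rec : ∀ k i, 1 ≤ i → i ≤ k →
    E i (k + 1) = -((T i).comp (∑ v ∈ Icc (i + 1) (k + 1), (Sb v).comp (E v (k + 1))))
  M_one_one : M 1 1 = LinearMap.id
  M_one : ∀ k, 1 ≤ k → M 1 (k + 1) = E 1 (k + 1)
  M_rec : ∀ k a, 2 ≤ a → a ≤ k + 1 →
    M a (k + 1) = ∑ b ∈ Icc (a - 1) k, (M (a - 1) b).comp (E (b + 1) (k + 1))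

def canonicalChain (M : ℕ → ℕ → B →ₗ[𝕂] B) (m : ℕ) (x : B) (i : ℕ) : B :=
  M (m - i) m x

namespace IsReductionScheme

variable {L Sb S : ℕ → B →ₗ[𝕂] B'} {N Nc : ℕ → Submodule 𝕂 B} {R Rc : ℕ → Submodule 𝕂 B'}
  {P : ℕ → B' →ₗ[𝕂] B'} {T : ℕ → B' →ₗ[𝕂] B} {E M : ℕ → ℕ → B →ₗ[𝕂] B}
  {k m n : ℕ} {x : B} {y : B'}

lemma N_antitone (h : IsReductionScheme L Sb S N Nc R Rc P T E M) : Antitone N :=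
  antitone_nat_of_succ_le fun k => h.N_succ k ▸ inf_le_right

lemma S_succ_apply (h : IsReductionScheme L Sb S N Nc R Rc P T E M) (k : ℕ) (x : B) :
    S (k + 1) x = projCompl P k (Sb (k + 1) x) := by
  simp [h.S_succ, projCompl_apply]

lemma S_one_apply (h : IsReductionScheme L Sb S N Nc R Rc P T E M) (x : B) : S 1 x = L 0 x := by
  simp [h.S_succ_apply 0, projCompl_apply, h.Sb_one]

lemma E_apply (h : IsReductionScheme L Sb S N Nc R Rc P T E M) {i : ℕ} (hi : 1 ≤ i)
    (hik : i ≤ k) (x : B) :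
    E i (k + 1) x = -T i (∑ v ∈ Icc (i + 1) (k + 1), Sb v (E v (k + 1) x)) := by
  simp [h.E_rec k i hi hik]

lemma M_diag (h : IsReductionScheme L Sb S N Nc R Rc P T E M) (hm : 1 ≤ m) :
    M m m = LinearMap.id := by
  induction m, hm using Nat.le_induction with
  | base => exact h.M_one_one
  | succ m hm ih =>
    rw [h.M_rec m (m + 1) (by omega) le_rfl, Nat.add_sub_cancel, Icc_self, sum_singleton, ih,
      h.E_diag]
    rfl

lemma projCompl_eq_zero_of_mem (h : IsReductionScheme L Sb S N Nc R Rc P T E M) {i : ℕ}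
    (hi : 1 ≤ i) (hik : i ≤ k) (hy : y ∈ R i) : projCompl P k y = 0 := by
  rw [projCompl_apply, sum_eq_single_of_mem i (mem_Icc.2 ⟨hi, hik⟩), h.P_eq_self i hi y hy,
    sub_self]
  intro j hj hji
  rcases lt_or_gt_of_ne hji with hlt | hlt
  · obtain ⟨i, rfl⟩ : ∃ i', i = i' + 1 := ⟨i - 1, by omega⟩
    exact h.P_eq_zero_of_mem_Rc j (mem_Icc.1 hj).1 y
      (h.Rc_antitone (Nat.le_of_lt_succ hlt) (h.R_le_Rc i hy))
  · exact h.P_eq_zero_of_mem_R j i hi hlt y hy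

lemma projCompl_eq_zero_of_mem_sup (h : IsReductionScheme L Sb S N Nc R Rc P T E M)
    (hy : y ∈ (Icc 1 k).sup R) : projCompl P k y = 0 := by
  have : (Icc 1 k).sup R ≤ LinearMap.ker (projCompl P k) :=
    Finset.sup_le fun i hi _ hy => h.projCompl_eq_zero_of_mem (mem_Icc.1 hi).1 (mem_Icc.1 hi).2 hy
  exact this hy

lemma L_zero_mem_R_one (h : IsReductionScheme L Sb S N Nc R Rc P T E M) (x : B) : L 0 x ∈ R 1 := by
  rw [h.R_succ, h.N_zero, ← h.S_one_apply]
  exact Submodule.mem_map_of_mem trivial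

lemma Sb_mem_sup_R (h : IsReductionScheme L Sb S N Nc R Rc P T E M) (hx : x ∈ N (m + 1)) :
    Sb (m + 2) x ∈ (Icc 1 (m + 2)).sup R := by
  have hS : S (m + 2) x ∈ R (m + 2) := h.R_succ (m + 1) ▸ Submodule.mem_map_of_mem hx
  have hSb : Sb (m + 2) x = S (m + 2) x + ∑ v ∈ Icc 1 (m + 1), P v (Sb (m + 2) x) := by
    rw [h.S_succ_apply, projCompl_apply, sub_add_cancel]
  rw [hSb]
  refine add_mem (le_sup (f := R) (by simp) hS) (sum_mem fun v hv => ?_)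
  exact le_sup (f := R) (mem_Icc.2 ⟨(mem_Icc.1 hv).1, (mem_Icc.1 hv).2.trans (by omega)⟩)
    (h.P_range v (mem_Icc.1 hv).1 ⟨_, rfl⟩)

lemma E_mem_N (h : IsReductionScheme L Sb S N Nc R Rc P T E M) (hx : x ∈ N (n + 1)) {b : ℕ}
    (hb : b ≤ n) : E (b + 1) (n + 1) x ∈ N b := by
  rcases hb.eq_or_lt with rfl | hlt
  · rw [h.E_diag]
    exact h.N_antitone b.le_succ hx
  · rw [h.E_apply (by omega) hlt]
    exact h.Nc_le b (neg_mem (h.T_mem _ (by omega) _))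

lemma projCompl_sum_Sb_E_eq_zero (h : IsReductionScheme L Sb S N Nc R Rc P T E M)
    (hx : S (m + 1) x = 0) {i : ℕ} (hi : 1 ≤ i) (him : i ≤ m) :
    projCompl P i (∑ v ∈ Icc (i + 1) (m + 1), Sb v (E v (m + 1) x)) = 0 := by
  -- descending induction on `i`, starting from `S (m + 1) x = 0` at `i = m`
  obtain ⟨d, hd⟩ := Nat.exists_eq_add_of_le him
  induction d generalizing i with
  | zero =>
    subst hd
    rw [Icc_self, sum_singleton, h.E_diag, ← h.S_succ_apply, LinearMap.id_apply, hx]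
  | succ d ih =>
    have hG := ih (i := i + 1) (by omega) (by omega) (by omega)
    rw [projCompl_succ_apply, sub_eq_zero] at hG
    rw [← insert_Icc_add_one_left_eq_Icc (by omega : i + 1 ≤ m + 1), sum_insert (by simp),
      map_add, ← h.S_succ_apply, h.E_apply (by omega) (by omega), map_neg, h.S_T _ (by omega),
      hG, neg_add_cancel]

lemma sum_comp_M_eq (h : IsReductionScheme L Sb S N Nc R Rc P T E M) (g : ℕ → B →ₗ[𝕂] B')
    {s : ℕ} (hs : 2 ≤ s) (hsn : s ≤ n + 1) (x : B) :
    ∑ a ∈ Icc s (n + 1), g a (M a (n + 1) x) =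
      ∑ b ∈ Icc (s - 1) n, ∑ a ∈ Icc (s - 1) b, g (a + 1) (M a b (E (b + 1) (n + 1) x)) := by
  obtain ⟨t, rfl⟩ : ∃ t, s = t + 1 := ⟨s - 1, by omega⟩
  calc ∑ a ∈ Icc (t + 1) (n + 1), g a (M a (n + 1) x)
      = ∑ a ∈ Icc (t + 1) (n + 1), ∑ b ∈ Icc (a - 1) n, g a (M (a - 1) b (E (b + 1) (n + 1) x)) :=
        sum_congr rfl fun a ha => by
          simp [h.M_rec n a (hs.trans (mem_Icc.1 ha).1) (mem_Icc.1 ha).2]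
    _ = ∑ b ∈ Icc t n, ∑ a ∈ Icc (t + 1) (b + 1), g a (M (a - 1) b (E (b + 1) (n + 1) x)) :=
        sum_comm' (by intro a b; simp only [mem_Icc]; omega)
    _ = _ := by
        simp_rw [← map_add_right_Icc, sum_map, addRightEmbedding_apply, Nat.add_sub_cancel]

lemma sum_L_M_eq_zero_of_S_eq_zero (h : IsReductionScheme L Sb S N Nc R Rc P T E M)
    (hx : S (n + 1) x = 0) : ∑ a ∈ Icc 1 (n + 1), L (a - 1) (M a (n + 1) x) = 0 := by
  cases n with
  | zero => simpa [h.M_one_one, ← h.S_one_apply]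
  | succ n =>
    have hG := h.projCompl_sum_Sb_E_eq_zero hx le_rfl (by omega : 1 ≤ n + 1)
    rw [projCompl_apply, Icc_self, sum_singleton, sub_eq_zero] at hG
    have hrest : ∑ a ∈ Icc (1 + 1) (n + 1 + 1), L (a - 1) (M a (n + 1 + 1) x) =
        ∑ v ∈ Icc (1 + 1) (n + 1 + 1), Sb v (E v (n + 1 + 1) x) := by
      rw [h.sum_comp_M_eq (fun a => L (a - 1)) (s := 1 + 1) le_rfl (by omega),
        ← map_add_right_Icc 1 (n + 1) 1, sum_map, Nat.add_sub_cancel]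
      refine sum_congr rfl fun b hb => ?_
      simp [h.Sb_succ b (mem_Icc.1 hb).1]
    rw [← insert_Icc_add_one_left_eq_Icc (by omega), sum_insert (by simp), hrest, Nat.sub_self,
      h.M_one _ (by omega), h.E_apply le_rfl (by omega), map_neg, ← h.S_one_apply,
      h.S_T 1 le_rfl, ← hG, neg_add_cancel]

lemma sum_L_M_eq_zero (h : IsReductionScheme L Sb S N Nc R Rc P T E M) (hx : x ∈ N m) {s : ℕ}
    (hs : 1 ≤ s) (hsm : s ≤ m) : ∑ a ∈ Icc s m, L (a - s) (M a m x) = 0 := by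
  induction m using Nat.strong_induction_on generalizing s x with
  | _ m ih =>
  obtain ⟨n, rfl⟩ : ∃ n, m = n + 1 := ⟨m - 1, by omega⟩
  rcases hs.eq_or_lt with rfl | hs
  · rw [h.N_succ] at hx
    exact h.sum_L_M_eq_zero_of_S_eq_zero hx.1
  · rw [h.sum_comp_M_eq (fun a => L (a - s)) hs hsm]
    refine sum_eq_zero fun b hb => ?_
    obtain ⟨hsb, hbn⟩ := mem_Icc.1 hb
    rw [← ih b (Nat.lt_succ_of_le hbn) (h.E_mem_N hx hbn) (by omega) hsb]
    refine sum_congr rfl fun a ha => ?_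
    have := (mem_Icc.1 ha).1
    rw [show a + 1 - s = a - (s - 1) by omega]

lemma canonicalChain_zero (h : IsReductionScheme L Sb S N Nc R Rc P T E M) (hm : 1 ≤ m)
    (x : B) : canonicalChain M m x 0 = x := by
  rw [canonicalChain, Nat.sub_zero, h.M_diag hm, LinearMap.id_apply]

lemma isJordanChain_canonicalChain (h : IsReductionScheme L Sb S N Nc R Rc P T E M)
    (hx : x ∈ N m) : IsJordanChain L m (canonicalChain M m x) := fun l hl => by
  have hIcc : Icc (m - l) m = (Icc 0 l).map (addRightEmbedding (m - l)) := by
    rw [map_add_right_Icc, zero_add, Nat.add_sub_cancel' (by omega)]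
  rw [← h.sum_L_M_eq_zero hx (s := m - l) (by omega) (by omega), hIcc, sum_map, range_eq_Ico,
    Ico_add_one_right_eq_Icc]
  refine sum_congr rfl fun i hi => ?_
  have := (mem_Icc.1 hi).2
  simp only [canonicalChain, addRightEmbedding_apply, Nat.add_sub_cancel]
  rw [show m - (l - i) = i + (m - l) by omega]

lemma chainTail_canonicalChain (h : IsReductionScheme L Sb S N Nc R Rc P T E M) (hm : 1 ≤ m)
    (x : B) : chainTail L (canonicalChain M m x) m = Sb (m + 1) x := by
  simp only [chainTail, canonicalChain, h.Sb_succ m hm, LinearMap.coe_sum, Finset.sum_apply,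
    LinearMap.comp_apply]
  refine sum_congr rfl fun i hi => ?_
  rw [Nat.sub_sub_self (mem_Icc.1 hi).2]

lemma exists_isJordanChain_of_mem (h : IsReductionScheme L Sb S N Nc R Rc P T E M)
    (hx : x ∈ N m) : ∃ b, b 0 = x ∧ IsJordanChain L m b := by
  rcases Nat.eq_zero_or_pos m with rfl | hm
  · exact ⟨fun _ => x, rfl, fun l hl => by omega⟩
  · exact ⟨_, h.canonicalChain_zero hm x, h.isJordanChain_canonicalChain hx⟩

lemma chainTail_sub_Sb_mem (h : IsReductionScheme L Sb S N Nc R Rc P T E M) {e : ℕ → B}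
    (he : IsJordanChain L (m + 1) e) (he0 : e 0 ∈ N (m + 1))
    (htail : ∀ d, IsJordanChain L m d → chainTail L d m ∈ (Icc 1 (m + 1)).sup R) :
    chainTail L e (m + 1) - Sb (m + 2) (e 0) ∈ (Icc 1 (m + 1)).sup R := by
  set d := e - canonicalChain M (m + 1) (e 0)
  have hd0 : d 0 = 0 := by simp [d, h.canonicalChain_zero]
  have hd : IsJordanChain L (m + 1) d := he.sub (h.isJordanChain_canonicalChain he0)
  rw [← h.chainTail_canonicalChain (by omega), ← chainTail_sub, chainTail_shift hd0]
  exact htail _ (hd.shift hd0)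

lemma mem_N_of_chainTail_sub_Sb_mem (h : IsReductionScheme L Sb S N Nc R Rc P T E M)
    {e : ℕ → B} (he : IsJordanChain L (m + 2) e) (he0 : e 0 ∈ N (m + 1))
    (hmem : chainTail L e (m + 1) - Sb (m + 2) (e 0) ∈ (Icc 1 (m + 1)).sup R) :
    e 0 ∈ N (m + 2) := by
  have hlevel : L 0 (e (m + 1)) + chainTail L e (m + 1) = 0 := by
    rw [← sum_range_eq_add_chainTail]
    exact he (m + 1) le_rfl
  have hL0 : L 0 (e (m + 1)) ∈ (Icc 1 (m + 1)).sup R :=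
    le_sup (f := R) (by simp) (h.L_zero_mem_R_one _)
  have hSb : Sb (m + 2) (e 0) =
      -(L 0 (e (m + 1)) + (chainTail L e (m + 1) - Sb (m + 2) (e 0))) := by
    rw [← add_sub_assoc, hlevel, zero_sub, neg_neg]
  rw [h.N_succ, Submodule.mem_inf, LinearMap.mem_ker, h.S_succ_apply, hSb, map_neg,
    h.projCompl_eq_zero_of_mem_sup (add_mem hL0 hmem), neg_zero]
  exact ⟨rfl, he0⟩

lemma mem_N_and_chainTail_mem (h : IsReductionScheme L Sb S N Nc R Rc P T E M) (m : ℕ)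
    {e : ℕ → B} (he : IsJordanChain L m e) :
    e 0 ∈ N m ∧ chainTail L e m ∈ (Icc 1 (m + 1)).sup R := by
  induction m using Nat.strong_induction_on generalizing e with
  | _ m ih =>
  have he0 : e 0 ∈ N m := by
    match m, ih, he with
    | 0, _, _ => exact h.N_zero ▸ Submodule.mem_top
    | 1, _, he =>
      rw [h.N_succ, h.N_zero, inf_top_eq, LinearMap.mem_ker, h.S_one_apply]
      simpa using he 0 le_rfl
    | n + 2, ih, he =>
      have he0 := (ih (n + 1) (by omega) (he.mono (by omega))).1
      exact h.mem_N_of_chainTail_sub_Sb_mem he he0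
        (h.chainTail_sub_Sb_mem (he.mono (by omega)) he0 fun d hd => (ih n (by omega) hd).2)
  refine ⟨he0, ?_⟩
  cases m with
  | zero => simp [chainTail]
  | succ n =>
    have hmem := h.chainTail_sub_Sb_mem he he0 fun d hd => (ih n (by omega) hd).2
    have hsup := sup_mono (f := R) (Icc_subset_Icc_right (by omega : n + 1 ≤ n + 1 + 1)) hmem
    simpa using add_mem hsup (h.Sb_mem_sup_R he0)

lemma mem_N_iff_exists_isJordanChain (h : IsReductionScheme L Sb S N Nc R Rc P T E M) (m : ℕ)
    (x : B) : x ∈ N m ↔ ∃ b, b 0 = x ∧ IsJordanChain L m b :=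
  ⟨h.exists_isJordanChain_of_mem, fun ⟨_, hb0, hb⟩ => hb0 ▸ (h.mem_N_and_chainTail_mem m hb).1⟩

lemma depth_eq_sSup (h : IsReductionScheme L Sb S N Nc R Rc P T E M) (x : B) :
    depth N x = sSup {r : ℕ∞ | ∃ m : ℕ, 1 ≤ m ∧ (∃ b, b 0 = x ∧ IsJordanChain L m b) ∧ r = m} := by
  simp only [depth, h.mem_N_iff_exists_isJordanChain]

end IsReductionScheme

end Scheme

theorem stmt_7_general
    {𝕂 : Type*} [RCLike 𝕂]
    {B B' : Type*} [AddCommGroup B] [Module 𝕂 B]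
    [AddCommGroup B'] [Module 𝕂 B']
    (L : ℕ → B →ₗ[𝕂] B')
    (Sb S : ℕ → B →ₗ[𝕂] B')
    (N Nc : ℕ → Submodule 𝕂 B)
    (R Rc : ℕ → Submodule 𝕂 B')
    (P : ℕ → B' →ₗ[𝕂] B')
    (T : ℕ → B' →ₗ[𝕂] B)
    (E M : ℕ → ℕ → B →ₗ[𝕂] B)
    (hN0 : N 0 = ⊤)
    (hSb1 : Sb 1 = L 0)
    (hSbrec : ∀ k, 1 ≤ k → Sb (k + 1) = ∑ i ∈ Finset.Icc 1 k, (L i).comp (M i k))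
    (hSdef : ∀ k, S (k + 1) = Sb (k + 1) - ∑ i ∈ Finset.Icc 1 k, (P i).comp (Sb (k + 1)))
    (hNdef : ∀ k, N (k + 1) = LinearMap.ker (S (k + 1)) ⊓ N k)
    (hRdef : ∀ k, R (k + 1) = Submodule.map (S (k + 1)) (N k))
    (hNcompl : ∀ k, Disjoint (Nc (k + 1)) (N (k + 1)) ∧ Nc (k + 1) ⊔ N (k + 1) = N k)
    (hRcompl : ∀ k, Disjoint (R (k + 1)) (Rc (k + 1)) ∧ R (k + 1) ⊔ Rc (k + 1) = Rc k)
    (hPrange : ∀ i, 1 ≤ i → LinearMap.range (P i) ≤ R i)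
    (hPid : ∀ i, 1 ≤ i → ∀ y ∈ R i, P i y = y)
    (hPzeroRc : ∀ i, 1 ≤ i → ∀ y ∈ Rc i, P i y = 0)
    (hPzeroR : ∀ i j, 1 ≤ j → j < i → ∀ y ∈ R j, P i y = 0)
    (hTrange : ∀ i, 1 ≤ i → ∀ y, T i y ∈ Nc i)
    (hST : ∀ i, 1 ≤ i → ∀ y, S i (T i y) = P i y)
    (hEdiag : ∀ k, E (k + 1) (k + 1) = LinearMap.id)
    (hErec : ∀ k i, 1 ≤ i → i ≤ k →
      E i (k + 1) = -((T i).comp (∑ v ∈ Finset.Icc (i + 1) (k + 1), (Sb v).comp (E v (k + 1)))))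
    (hM11 : M 1 1 = LinearMap.id)
    (hM1 : ∀ k, 1 ≤ k → M 1 (k + 1) = E 1 (k + 1))
    (hMrec : ∀ k a, 2 ≤ a → a ≤ k + 1 →
      M a (k + 1) = ∑ b ∈ Finset.Icc (a - 1) k, (M (a - 1) b).comp (E (b + 1) (k + 1)))
    (rank : B → ℕ∞)
    (hrank : ∀ b0 : B, rank b0 = sSup {x : ℕ∞ | ∃ m : ℕ, 1 ≤ m ∧
      (∃ b : ℕ → B, b 0 = b0 ∧
        ∀ l, l + 1 ≤ m → ∑ i ∈ Finset.range (l + 1), L i (b (l - i)) = 0) ∧ x = (m : ℕ∞)})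
    (k : ℕ) :
    (((∀ b0 : B, rank b0 ≤ (k : ℕ∞) ∨ rank b0 = ⊤) ∧ ∃ b0 : B, rank b0 = (k : ℕ∞)) ↔
      (Nc (k + 1) ≠ ⊥ ∧ ∀ l, 2 ≤ l → Nc (k + l) = ⊥)) ∧
    (((∀ b0 : B, rank b0 ≤ (k : ℕ∞) ∨ rank b0 = ⊤) ∧ ∃ b0 : B, rank b0 = (k : ℕ∞)) ↔
      (R (k + 1) ≠ ⊥ ∧ ∀ l, 2 ≤ l → R (k + l) = ⊥)) ∧
    (((∀ b0 : B, rank b0 ≤ (k : ℕ∞) ∨ rank b0 = ⊤) ∧ ∃ b0 : B, rank b0 = (k : ℕ∞)) ↔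
      (N (k + 1) < N k ∧ ∀ l, 2 ≤ l → N (k + 1) = N (k + l))) := by
  have h : IsReductionScheme L Sb S N Nc R Rc P T E M :=
    { N_zero := hN0, Sb_one := hSb1, Sb_succ := hSbrec, S_succ := hSdef, N_succ := hNdef,
      R_succ := hRdef, P_range := hPrange, P_eq_self := hPid, P_eq_zero_of_mem_Rc := hPzeroRc,
      P_eq_zero_of_mem_R := hPzeroR, T_mem := hTrange, S_T := hST, E_diag := hEdiag,
      E_rec := hErec, M_one_one := hM11, M_one := hM1, M_rec := hMrec
      Nc_le := fun k => (hNcompl k).2 ▸ le_sup_left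
      R_le_Rc := fun k => (hRcompl k).2 ▸ le_sup_left
      Rc_antitone := antitone_nat_of_succ_le fun k => (hRcompl k).2 ▸ le_sup_right }
  obtain rfl : rank = depth N := funext fun b0 => (hrank b0).trans (h.depth_eq_sSup b0).symm
  have hNc := not_and_forall_iff_lt_and_forall_eq h.N_antitone (p := fun j => Nc j = ⊥)
    (fun j => eq_bot_iff_of_disjoint_of_sup_eq (hNcompl j).1 (hNcompl j).2) k
  have hR := not_and_forall_iff_lt_and_forall_eq h.N_antitone (p := fun j => R j = ⊥)
    (fun j => by rw [hRdef, hNdef, ← LinearMap.le_ker_iff_map, inf_eq_right]) k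
  have hd := depth_stabilizes_iff h.N_antitone hN0 k
  exact ⟨hd.trans hNc.symm, hd.trans hR.symm, hd⟩

theorem stmt_7
    {𝕂 : Type*} [RCLike 𝕂]
    {B B' : Type*} [AddCommGroup B] [Module 𝕂 B]
    [AddCommGroup B'] [Module 𝕂 B']
    (L : ℕ → B →ₗ[𝕂] B')
    (Sb S : ℕ → B →ₗ[𝕂] B')
    (N Nc : ℕ → Submodule 𝕂 B)
    (R Rc : ℕ → Submodule 𝕂 B')
    (P : ℕ → B' →ₗ[𝕂] B')
    (T : ℕ → B' →ₗ[𝕂] B)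
    (E M : ℕ → ℕ → B →ₗ[𝕂] B)
    (hL : ∃ i, L i ≠ 0)
    (hN0 : N 0 = ⊤) (hRc0 : Rc 0 = ⊤)
    (hSb1 : Sb 1 = L 0)
    (hSbrec : ∀ k, 1 ≤ k → Sb (k + 1) = ∑ i ∈ Finset.Icc 1 k, (L i).comp (M i k))
    (hSdef : ∀ k, S (k + 1) = Sb (k + 1) - ∑ i ∈ Finset.Icc 1 k, (P i).comp (Sb (k + 1)))
    (hNdef : ∀ k, N (k + 1) = LinearMap.ker (S (k + 1)) ⊓ N k)
    (hRdef : ∀ k, R (k + 1) = Submodule.map (S (k + 1)) (N k))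
    (hNcompl : ∀ k, Disjoint (Nc (k + 1)) (N (k + 1)) ∧ Nc (k + 1) ⊔ N (k + 1) = N k)
    (hRcompl : ∀ k, Disjoint (R (k + 1)) (Rc (k + 1)) ∧ R (k + 1) ⊔ Rc (k + 1) = Rc k)
    (hPrange : ∀ i, 1 ≤ i → LinearMap.range (P i) ≤ R i)
    (hPid : ∀ i, 1 ≤ i → ∀ y ∈ R i, P i y = y)
    (hPzeroRc : ∀ i, 1 ≤ i → ∀ y ∈ Rc i, P i y = 0)
    (hPzeroR : ∀ i j, 1 ≤ j → j < i → ∀ y ∈ R j, P i y = 0)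
    (hTrange : ∀ i, 1 ≤ i → ∀ y, T i y ∈ Nc i)
    (hTS : ∀ i, 1 ≤ i → ∀ x ∈ Nc i, T i (S i x) = x)
    (hST : ∀ i, 1 ≤ i → ∀ y, S i (T i y) = P i y)
    (hE11 : E 1 1 = LinearMap.id)
    (hEdiag : ∀ k, E (k + 1) (k + 1) = LinearMap.id)
    (hErec : ∀ k i, 1 ≤ i → i ≤ k →
      E i (k + 1) = -((T i).comp (∑ v ∈ Finset.Icc (i + 1) (k + 1), (Sb v).comp (E v (k + 1)))))
    (hM11 : M 1 1 = LinearMap.id)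
    (hM1 : ∀ k, 1 ≤ k → M 1 (k + 1) = E 1 (k + 1))
    (hMrec : ∀ k a, 2 ≤ a → a ≤ k + 1 →
      M a (k + 1) = ∑ b ∈ Finset.Icc (a - 1) k, (M (a - 1) b).comp (E (b + 1) (k + 1)))
    (rank : B → ℕ∞)
    (hrank : ∀ b0 : B, rank b0 = sSup {x : ℕ∞ | ∃ m : ℕ, 1 ≤ m ∧
      (∃ b : ℕ → B, b 0 = b0 ∧
        ∀ l, l + 1 ≤ m → ∑ i ∈ Finset.range (l + 1), L i (b (l - i)) = 0) ∧ x = (m : ℕ∞)})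
    (k : ℕ) :
    (((∀ b0 : B, rank b0 ≤ (k : ℕ∞) ∨ rank b0 = ⊤) ∧ ∃ b0 : B, rank b0 = (k : ℕ∞)) ↔
      (Nc (k + 1) ≠ ⊥ ∧ ∀ l, 2 ≤ l → Nc (k + l) = ⊥)) ∧
    (((∀ b0 : B, rank b0 ≤ (k : ℕ∞) ∨ rank b0 = ⊤) ∧ ∃ b0 : B, rank b0 = (k : ℕ∞)) ↔
      (R (k + 1) ≠ ⊥ ∧ ∀ l, 2 ≤ l → R (k + l) = ⊥)) ∧
    (((∀ b0 : B, rank b0 ≤ (k : ℕ∞) ∨ rank b0 = ⊤) ∧ ∃ b0 : B, rank b0 = (k : ℕ∞)) ↔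
      (N (k + 1) < N k ∧ ∀ l, 2 ≤ l → N (k + 1) = N (k + l))) :=
  stmt_7_general L Sb S N Nc R Rc P T E M hN0 hSb1 hSbrec hSdef hNdef hRdef hNcompl hRcompl hPrange
    hPid hPzeroRc hPzeroR hTrange hST hEdiag hErec hM11 hM1 hMrec rank hrank k
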